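/- Let A ∈ ℂ^{n×n} be Hermitian (A = A*), with Moore–Penrose pseudoinverse A†, and let S ⊆ {1,…,n}×{1,…,n} be a sparsity pattern that is symmetric, i.e., (i,j) ∈ S if and only if (j,i) ∈ S. If X ∈ F(A,S) satisfies J(X;A) ≤ J(Y;A) for all Y ∈ F(A,S) (i.e., X is a minimizer of the sparsification problem), then X is Hermitian: X = X*. -/

import Mathlib

/-!
Both `X` and `Xᴴ` are feasible and, since `A` and `A†` are Hermitian, have the same misfit. By
the parallelogram law the misfit at their midpoint falls short of `J(X;A)` by
`⅛ (‖(X - Xᴴ)A†‖² + ‖A†(X - Xᴴ)‖²)`, so minimality forces `(X - Xᴴ)A† = 0`. As `X - Xᴴ`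
vanishes on the null space of `A`, it equals `(X - Xᴴ)A†A = 0`.
-/

open scoped Matrix

/-- `B` is the Moore–Penrose pseudoinverse of `A`. -/
def IsMPInv {m n : ℕ} (A : Matrix (Fin m) (Fin n) ℂ) (B : Matrix (Fin n) (Fin m) ℂ) : Prop :=
  A * B * A = A ∧ B * A * B = B ∧ (A * B)ᴴ = A * B ∧ (B * A)ᴴ = B * A

/-- Squared Frobenius norm. -/
noncomputable def frobSq {m n : ℕ} (M : Matrix (Fin m) (Fin n) ℂ) : ℝ :=
  ∑ i, ∑ j, ‖M i j‖ ^ 2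

/-- The misfit functional `J(X;A) = ½‖(X-A)A†‖_F² + ½‖A†(X-A)‖_F²`,
with the pseudoinverse `Ad` of `A` given explicitly. -/
noncomputable def Jmis {m n : ℕ} (X A : Matrix (Fin m) (Fin n) ℂ)
    (Ad : Matrix (Fin n) (Fin m) ℂ) : ℝ :=
  (1 / 2) * frobSq ((X - A) * Ad) + (1 / 2) * frobSq (Ad * (X - A))

/-- The feasible set `F(A,S)`: the null space of `A` is contained in that of `X`,
the null space of `A*` in that of `X*`, and `X` vanishes outside the pattern `S`. -/
def Feasible {m n : ℕ} (A X : Matrix (Fin m) (Fin n) ℂ) (S : Set (Fin m × Fin n)) : Prop :=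
  (∀ v : Fin n → ℂ, A.mulVec v = 0 → X.mulVec v = 0) ∧
  (∀ v : Fin m → ℂ, Aᴴ.mulVec v = 0 → Xᴴ.mulVec v = 0) ∧
  (∀ ij : Fin m × Fin n, ij ∉ S → X ij.1 ij.2 = 0)

section Frobenius

variable {m n : ℕ}

lemma frobSq_nonneg (M : Matrix (Fin m) (Fin n) ℂ) : 0 ≤ frobSq M :=
  Finset.sum_nonneg fun _ _ => Finset.sum_nonneg fun _ _ => by positivity

lemma frobSq_eq_zero_iff {M : Matrix (Fin m) (Fin n) ℂ} : frobSq M = 0 ↔ M = 0 := by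
  refine ⟨fun h => ?_, fun h => by simp [h, frobSq]⟩
  ext i j
  have hi := (Finset.sum_eq_zero_iff_of_nonneg
    (fun i _ => Finset.sum_nonneg fun j _ => by positivity)).1 h i (Finset.mem_univ i)
  have hij := (Finset.sum_eq_zero_iff_of_nonneg (fun j _ => by positivity)).1 hi j
    (Finset.mem_univ j)
  simpa using hij

lemma frobSq_conjTranspose (M : Matrix (Fin m) (Fin n) ℂ) : frobSq Mᴴ = frobSq M := by
  rw [frobSq, Finset.sum_comm, frobSq]
  simp [Matrix.conjTranspose_apply]

lemma frobSq_smul (c : ℂ) (M : Matrix (Fin m) (Fin n) ℂ) :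
    frobSq (c • M) = ‖c‖ ^ 2 * frobSq M := by
  simp only [frobSq, Matrix.smul_apply, smul_eq_mul, norm_mul, mul_pow, Finset.mul_sum]

lemma frobSq_add_add_frobSq_sub (M N : Matrix (Fin m) (Fin n) ℂ) :
    frobSq (M + N) + frobSq (M - N) = 2 * (frobSq M + frobSq N) := by
  simp only [frobSq, ← Finset.sum_add_distrib, Finset.mul_sum, Matrix.add_apply,
    Matrix.sub_apply]
  refine Finset.sum_congr rfl fun i _ => Finset.sum_congr rfl fun j _ => ?_
  simp only [Complex.sq_norm, Complex.normSq_apply,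
    Complex.add_re, Complex.add_im, Complex.sub_re, Complex.sub_im]
  ring

lemma frobSq_midpoint (M N : Matrix (Fin m) (Fin n) ℂ) :
    frobSq ((1 / 2 : ℂ) • (M + N)) = frobSq M / 2 + frobSq N / 2 - frobSq (M - N) / 4 := by
  have hhalf : ‖(1 / 2 : ℂ)‖ ^ 2 = 1 / 4 := by norm_num
  rw [frobSq_smul, hhalf]
  linarith [frobSq_add_add_frobSq_sub M N]

end Frobenius

lemma Matrix.mul_eq_zero_of_ker_le {R ι κ ν ρ : Type*} [Semiring R] [Fintype ν] [Fintype ρ]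
    [DecidableEq ρ] {A : Matrix κ ν R} {D : Matrix ι ν R} {M : Matrix ν ρ R}
    (hker : ∀ v, A *ᵥ v = 0 → D *ᵥ v = 0) (hM : A * M = 0) : D * M = 0 := by
  refine Matrix.ext_of_mulVec_single fun i => ?_
  rw [← Matrix.mulVec_mulVec, hker _ (by rw [Matrix.mulVec_mulVec, hM, Matrix.zero_mulVec]),
    Matrix.zero_mulVec]

section PseudoInverse

variable {m n : ℕ} {A : Matrix (Fin m) (Fin n) ℂ} {B C : Matrix (Fin n) (Fin m) ℂ}

theorem IsMPInv.unique (hB : IsMPInv A B) (hC : IsMPInv A C) : B = C := by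
  obtain ⟨b1, b2, b3, b4⟩ := hB
  obtain ⟨c1, c2, c3, c4⟩ := hC
  have hAB : A * B = A * C := by
    calc A * B = (A * B)ᴴ := b3.symm
      _ = ((A * C) * (A * B))ᴴ := by rw [← Matrix.mul_assoc, c1]
      _ = (A * B) * (A * C) := by rw [Matrix.conjTranspose_mul, b3, c3]
      _ = A * C := by rw [← Matrix.mul_assoc, b1]
  have hBA : B * A = C * A := by
    calc B * A = (B * A)ᴴ := b4.symm
      _ = ((B * A) * (C * A))ᴴ := by
          rw [← Matrix.mul_assoc, Matrix.mul_assoc B A C, Matrix.mul_assoc B, c1]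
      _ = (C * A) * (B * A) := by rw [Matrix.conjTranspose_mul, b4, c4]
      _ = C * A := by rw [Matrix.mul_assoc, ← Matrix.mul_assoc A, b1]
  calc B = B * A * B := b2.symm
    _ = C * A * C := by rw [hBA, Matrix.mul_assoc, hAB, ← Matrix.mul_assoc]
    _ = C := c2

theorem IsMPInv.conjTranspose (h : IsMPInv A B) : IsMPInv Aᴴ Bᴴ := by
  obtain ⟨h1, h2, h3, h4⟩ := h
  refine ⟨?_, ?_, ?_, ?_⟩
  · rw [← Matrix.conjTranspose_mul, ← Matrix.conjTranspose_mul, ← Matrix.mul_assoc, h1]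
  · rw [← Matrix.conjTranspose_mul, ← Matrix.conjTranspose_mul, ← Matrix.mul_assoc, h2]
  · rw [← Matrix.conjTranspose_mul, h4]
    exact h4
  · rw [← Matrix.conjTranspose_mul, h3]
    exact h3

theorem IsMPInv.conjTranspose_eq {A : Matrix (Fin n) (Fin n) ℂ} {B : Matrix (Fin n) (Fin n) ℂ}
    (h : IsMPInv A B) (hA : A.IsHermitian) : Bᴴ = B := by
  have h' := h.conjTranspose
  rw [hA.eq] at h'
  exact h'.unique h

theorem IsMPInv.mul_mul_eq_self {ι : Type*} {D : Matrix ι (Fin n) ℂ} (h : IsMPInv A B)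
    (hker : ∀ v, A *ᵥ v = 0 → D *ᵥ v = 0) : D * B * A = D := by
  have hproj : A * (1 - B * A) = 0 := by
    rw [Matrix.mul_sub, Matrix.mul_one, ← Matrix.mul_assoc, h.1, sub_self]
  have hD := Matrix.mul_eq_zero_of_ker_le hker hproj
  rwa [Matrix.mul_sub, Matrix.mul_one, sub_eq_zero, eq_comm, ← Matrix.mul_assoc] at hD

end PseudoInverse

section Misfit

variable {m n : ℕ}

lemma Jmis_midpoint (X Y A : Matrix (Fin m) (Fin n) ℂ) (Ad : Matrix (Fin n) (Fin m) ℂ) :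
    Jmis ((1 / 2 : ℂ) • (X + Y)) A Ad = Jmis X A Ad / 2 + Jmis Y A Ad / 2
      - (frobSq ((X - Y) * Ad) + frobSq (Ad * (X - Y))) / 8 := by
  have hsub : (1 / 2 : ℂ) • (X + Y) - A = (1 / 2 : ℂ) • ((X - A) + (Y - A)) := by module
  have hdiff : (X - A) - (Y - A) = X - Y := sub_sub_sub_cancel_right X Y A
  simp only [Jmis, hsub, Matrix.smul_mul, Matrix.mul_smul, Matrix.add_mul, Matrix.mul_add,
    frobSq_midpoint, ← Matrix.sub_mul, ← Matrix.mul_sub, hdiff]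
  ring

lemma Jmis_conjTranspose {A Ad : Matrix (Fin n) (Fin n) ℂ} (hA : A.IsHermitian) (hAd : Adᴴ = Ad)
    (X : Matrix (Fin n) (Fin n) ℂ) : Jmis Xᴴ A Ad = Jmis X A Ad := by
  have hleft : (Xᴴ - A) * Ad = (Ad * (X - A))ᴴ := by
    rw [Matrix.conjTranspose_mul, Matrix.conjTranspose_sub, hA.eq, hAd]
  have hright : Ad * (Xᴴ - A) = ((X - A) * Ad)ᴴ := by
    rw [Matrix.conjTranspose_mul, Matrix.conjTranspose_sub, hA.eq, hAd]
  rw [Jmis, Jmis, hleft, hright, frobSq_conjTranspose, frobSq_conjTranspose, add_comm]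

end Misfit

section Feasible

variable {m n : ℕ} {A X Y : Matrix (Fin m) (Fin n) ℂ} {S : Set (Fin m × Fin n)}

lemma Feasible.add (hX : Feasible A X S) (hY : Feasible A Y S) : Feasible A (X + Y) S := by
  refine ⟨fun v hv => ?_, fun v hv => ?_, fun ij hij => ?_⟩
  · rw [Matrix.add_mulVec, hX.1 v hv, hY.1 v hv, add_zero]
  · rw [Matrix.conjTranspose_add, Matrix.add_mulVec, hX.2.1 v hv, hY.2.1 v hv, add_zero]
  · rw [Matrix.add_apply, hX.2.2 ij hij, hY.2.2 ij hij, add_zero]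

lemma Feasible.smul (hX : Feasible A X S) (c : ℂ) : Feasible A (c • X) S := by
  refine ⟨fun v hv => ?_, fun v hv => ?_, fun ij hij => ?_⟩
  · rw [Matrix.smul_mulVec, hX.1 v hv, smul_zero]
  · rw [Matrix.conjTranspose_smul, Matrix.smul_mulVec, hX.2.1 v hv, smul_zero]
  · rw [Matrix.smul_apply, hX.2.2 ij hij, smul_zero]

lemma Feasible.conjTranspose {A X : Matrix (Fin n) (Fin n) ℂ} {S : Set (Fin n × Fin n)}
    (hX : Feasible A X S) (hA : A.IsHermitian) (hS : ∀ i j : Fin n, (i, j) ∈ S ↔ (j, i) ∈ S) :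
    Feasible A Xᴴ S := by
  refine ⟨fun v hv => hX.2.1 v (by rwa [hA.eq]), fun v hv => ?_, fun ij hij => ?_⟩
  · rw [Matrix.conjTranspose_conjTranspose]
    exact hX.1 v (by rwa [hA.eq] at hv)
  · rw [Matrix.conjTranspose_apply, hX.2.2 (ij.2, ij.1) fun h => hij ((hS _ _).1 h), star_zero]

end Feasible

/-- if `A` is Hermitian, the pattern `S` is symmetric, and `X` minimizes the
misfit over `F(A,S)`, then `X` is Hermitian. -/
theorem stmt18 {n : ℕ} (A X Ad : Matrix (Fin n) (Fin n) ℂ)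
    (hA : A.IsHermitian) (hMP : IsMPInv A Ad)
    (S : Set (Fin n × Fin n)) (hS : ∀ i j : Fin n, (i, j) ∈ S ↔ (j, i) ∈ S)
    (hXfeas : Feasible A X S)
    (hXmin : ∀ Y, Feasible A Y S → Jmis X A Ad ≤ Jmis Y A Ad) :
    X.IsHermitian := by
  have hXH : Feasible A Xᴴ S := hXfeas.conjTranspose hA hS
  have hmid := hXmin _ ((hXfeas.add hXH).smul (1 / 2))
  rw [Jmis_midpoint, Jmis_conjTranspose hA (hMP.conjTranspose_eq hA)] at hmid
  have hDAd : (X - Xᴴ) * Ad = 0 := frobSq_eq_zero_iff.1 <| by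
    linarith [frobSq_nonneg ((X - Xᴴ) * Ad), frobSq_nonneg (Ad * (X - Xᴴ))]
  have hker : ∀ v, A *ᵥ v = 0 → (X - Xᴴ) *ᵥ v = 0 := fun v hv => by
    rw [Matrix.sub_mulVec, hXfeas.1 v hv, hXH.1 v hv, sub_zero]
  have hD : X - Xᴴ = 0 := by
    rw [← hMP.mul_mul_eq_self hker, hDAd, Matrix.zero_mul]
  exact (sub_eq_zero.1 hD).symm
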